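/- Let f be a nonconstant function in the Pick class and x ∈ ℝ a B-point for f (so that the nontangential limit f(x) ∈ ℝ and angular derivative f'(x) > 0 exist). Then the reduction g(z) = -1/(f(z) - f(x)) + 1/(f'(x)(z-x)) also belongs to the Pick class. -/

import Mathlib

open Complex Filter Finset Metric Set

noncomputable section

/-- The open upper half-plane. -/
def UHP : Set ℂ := {z : ℂ | 0 < z.im}

/-- The Pick class: analytic functions on the upper half-plane with nonnegative
imaginary part there. -/
def IsPick (f : ℂ → ℂ) : Prop :=
  DifferentiableOn ℂ f UHP ∧ ∀ z ∈ UHP, 0 ≤ (f z).im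

/-- A nontangential approach region at `x ∈ ℝ` with aperture `K`. -/
def ntRegion (x K : ℝ) : Set ℂ := {z : ℂ | 0 < z.im ∧ ‖z - x‖ ≤ K * z.im}

/-- `f z → L` as `z → x` nontangentially in the upper half-plane. -/
def NTTendsto (f : ℂ → ℂ) (x : ℝ) (L : ℂ) : Prop :=
  ∀ K > 0, Tendsto f (nhdsWithin (x : ℂ) (ntRegion x K)) (nhds L)

/-- `r z = o((z-x)^n)` as `z → x` nontangentially. -/
def NTLittleO (r : ℂ → ℂ) (x : ℝ) (n : ℕ) : Prop :=
  NTTendsto (fun z => r z / (z - (x : ℂ)) ^ n) x 0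

/-- `f` has the pseudo-Taylor expansion of order `n` about `x` with coefficients `c`. -/
def HasPseudoTaylor (f : ℂ → ℂ) (x : ℝ) (n : ℕ) (c : ℕ → ℂ) : Prop :=
  NTLittleO (fun z => f z - ∑ j ∈ Finset.range (n + 1), c j * (z - (x : ℂ)) ^ j) x n

/-!
A nonconstant Pick function maps the upper half-plane into itself (open mapping theorem), so by
the Schwarz–Pick lemma (the Schwarz lemma on the disc, conjugated by Cayley transforms) it does not
increase `|w - z|² / (Im w · Im z)`. Letting `w = x + it` tend to `x` vertically, where
`Im f(w) / t → f'(x)`, gives Julia's inequality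
`Im z · |f(z) - f(x)|² ≤ f'(x) · Im f(z) · |z - x|²`, and this is exactly `Im g(z) ≥ 0`, because
`Im (-1/u) = Im u / |u|²` and `Im (1/(a v)) = -Im v / (a |v|²)` for real `a`.
-/

open ComplexConjugate Topology

lemma isOpen_UHP : IsOpen UHP := isOpen_lt continuous_const continuous_im

lemma IsPick.mapsTo_UHP {f : ℂ → ℂ} (hf : IsPick f) (hnc : ∃ z ∈ UHP, ∃ w ∈ UHP, f z ≠ f w) :
    MapsTo f UHP UHP := by
  obtain ⟨z, hz, w, hw, hne⟩ := hnc
  have hopen : IsOpen (f '' UHP) :=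
    ((hf.1.analyticOnNhd isOpen_UHP).is_constant_or_isOpen
      (convex_halfSpace_im_gt 0).isPreconnected).resolve_left
      (fun ⟨c, hc⟩ => hne ((hc z hz).trans (hc w hw).symm)) UHP le_rfl isOpen_UHP
  have himage : f '' UHP ⊆ interior {u : ℂ | 0 ≤ u.im} :=
    hopen.subset_interior_iff.2 (image_subset_iff.2 hf.2)
  rw [interior_setOfPred_le_im] at himage
  exact fun u hu => himage (mem_image_of_mem f hu)

lemma sub_conj_ne_zero {u p : ℂ} (hu : 0 < u.im) (hp : 0 < p.im) : u - conj p ≠ 0 := by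
  intro h
  have := congrArg im h
  simp only [sub_im, conj_im, sub_neg_eq_add, zero_im] at this
  linarith

lemma sub_ofReal_ne_zero {u : ℂ} (hu : 0 < u.im) (r : ℝ) : u - r ≠ 0 := by
  intro h
  have := congrArg im h
  simp only [sub_im, ofReal_im, sub_zero, zero_im] at this
  linarith

lemma normSq_sub_conj (u p : ℂ) : normSq (u - conj p) = normSq (u - p) + 4 * u.im * p.im := by
  simp only [normSq_apply, sub_re, sub_im, conj_re, conj_im]
  ring

lemma normSq_sub_comm (u v : ℂ) : normSq (u - v) = normSq (v - u) := by
  rw [← normSq_neg, neg_sub]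

/-- The Cayley map of the upper half-plane onto the unit disc sending `p` to `0`. -/
def cayley (p u : ℂ) : ℂ := (u - p) / (u - conj p)

def cayleyInv (p v : ℂ) : ℂ := (p - v * conj p) / (1 - v)

lemma norm_cayley_lt_one {p u : ℂ} (hp : 0 < p.im) (hu : 0 < u.im) : ‖cayley p u‖ < 1 := by
  rw [cayley, norm_div, div_lt_one (norm_pos_iff.2 (sub_conj_ne_zero hu hp)),
    ← sq_lt_sq₀ (norm_nonneg _) (norm_nonneg _), Complex.sq_norm, Complex.sq_norm, normSq_sub_conj]
  nlinarith

lemma im_cayleyInv_pos {p v : ℂ} (hp : 0 < p.im) (hv : ‖v‖ < 1) : 0 < (cayleyInv p v).im := by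
  have hv1 : 0 < normSq (1 - v) := normSq_pos.2 (sub_ne_zero.2 (by rintro rfl; simp at hv))
  have hnormSq : normSq v < 1 := by rw [← Complex.sq_norm]; nlinarith [norm_nonneg v]
  have hnum : (p - v * conj p).im * (1 - v).re - (p - v * conj p).re * (1 - v).im =
      p.im * (1 - normSq v) := by
    simp only [normSq_apply, sub_re, sub_im, mul_re, mul_im, conj_re, conj_im, one_re, one_im]
    ring
  rw [cayleyInv, div_im, div_sub_div_same, hnum]
  exact div_pos (mul_pos hp (by linarith)) hv1

lemma cayleyInv_cayley {p u : ℂ} (hp : 0 < p.im) (hu : 0 < u.im) :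
    cayleyInv p (cayley p u) = u := by
  have hd := sub_conj_ne_zero hu hp
  have hden : 1 - cayley p u = (p - conj p) / (u - conj p) := by
    rw [cayley]
    field_simp
    ring
  rw [cayleyInv, hden, div_eq_iff (div_ne_zero (sub_conj_ne_zero hp hp) hd), cayley]
  field_simp
  ring

lemma differentiableOn_cayley {p : ℂ} (hp : 0 < p.im) : DifferentiableOn ℂ (cayley p) UHP :=
  DifferentiableOn.div (by fun_prop) (by fun_prop) fun _ hu => sub_conj_ne_zero hu hp

lemma differentiableOn_cayleyInv (p : ℂ) : DifferentiableOn ℂ (cayleyInv p) (ball 0 1) :=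
  DifferentiableOn.div (by fun_prop) (by fun_prop) fun _ hv =>
    sub_ne_zero.2 (by rintro rfl; simp at hv)

theorem norm_cayley_le_of_mapsTo_UHP {f : ℂ → ℂ} (hd : DifferentiableOn ℂ f UHP)
    (hmaps : MapsTo f UHP UHP) {z w : ℂ} (hz : z ∈ UHP) (hw : w ∈ UHP) :
    ‖cayley (f z) (f w)‖ ≤ ‖cayley z w‖ := by
  have hinv : MapsTo (cayleyInv z) (ball 0 1) UHP := fun v hv =>
    im_cayleyInv_pos hz (mem_ball_zero_iff.1 hv)
  have hF : MapsTo (cayley (f z) ∘ f ∘ cayleyInv z) (ball 0 1) (closedBall 0 1) := fun v hv =>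
    mem_closedBall_zero_iff.2 (norm_cayley_lt_one (hmaps hz) (hmaps (hinv hv))).le
  have hschwarz := Complex.norm_le_norm_of_mapsTo_ball
    ((differentiableOn_cayley (hmaps hz)).comp (hd.comp (differentiableOn_cayleyInv z) hinv)
      (hmaps.comp hinv)) hF (by simp [cayley, cayleyInv]) (norm_cayley_lt_one hz hw)
  simpa only [Function.comp, cayleyInv_cayley hz hw] using hschwarz

theorem normSq_sub_mul_im_le_of_mapsTo_UHP {f : ℂ → ℂ} (hd : DifferentiableOn ℂ f UHP)
    (hmaps : MapsTo f UHP UHP) {z w : ℂ} (hz : z ∈ UHP) (hw : w ∈ UHP) :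
    normSq (f w - f z) * (w.im * z.im) ≤ normSq (w - z) * ((f w).im * (f z).im) := by
  have hpick := norm_cayley_le_of_mapsTo_UHP hd hmaps hz hw
  rw [cayley, cayley, norm_div, norm_div,
    div_le_div_iff₀ (norm_pos_iff.2 (sub_conj_ne_zero (hmaps hw) (hmaps hz)))
      (norm_pos_iff.2 (sub_conj_ne_zero hw hz)), ← sq_le_sq₀ (by positivity) (by positivity),
    mul_pow, mul_pow, Complex.sq_norm, Complex.sq_norm, Complex.sq_norm, Complex.sq_norm,
    normSq_sub_conj, normSq_sub_conj] at hpick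
  linarith

lemma tendsto_vertical_ntRegion (x : ℝ) :
    Tendsto (fun t : ℝ => (x : ℂ) + t * I) (𝓝[>] 0) (𝓝[ntRegion x 1] (x : ℂ)) := by
  refine tendsto_nhdsWithin_iff.2 ⟨?_, ?_⟩
  · have hcont : Continuous fun t : ℝ => (x : ℂ) + t * I := by fun_prop
    simpa using (hcont.tendsto 0).mono_left nhdsWithin_le_nhds
  · filter_upwards [self_mem_nhdsWithin] with t (ht : 0 < t)
    simp [ntRegion, abs_of_pos ht, ht]

lemma NTTendsto.tendsto_vertical {f : ℂ → ℂ} {x : ℝ} {L : ℂ} (h : NTTendsto f x L) :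
    Tendsto (fun t : ℝ => f (x + t * I)) (𝓝[>] 0) (𝓝 L) :=
  (h 1 one_pos).comp (tendsto_vertical_ntRegion x)

lemma tendsto_im_div_of_ntTendsto_slope {f : ℂ → ℂ} {x L A : ℝ}
    (hA : NTTendsto (fun z => (f z - L) / (z - x)) x A) :
    Tendsto (fun t : ℝ => (f (x + t * I)).im / t) (𝓝[>] 0) (𝓝 A) := by
  refine ((continuous_re.tendsto _).comp hA.tendsto_vertical).congr' ?_
  filter_upwards [self_mem_nhdsWithin] with t (ht : 0 < t)
  simp only [add_sub_cancel_left, Function.comp_apply, div_re, sub_re, ofReal_re, mul_re, I_re,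
    mul_zero, ofReal_im, I_im, mul_one, sub_self, normSq_apply, mul_im, add_zero, zero_add,
    zero_div, sub_im, sub_zero]
  field_simp

theorem julia_inequality {f : ℂ → ℂ} {x L A : ℝ} (hd : DifferentiableOn ℂ f UHP)
    (hmaps : MapsTo f UHP UHP) (hL : NTTendsto f x L)
    (hA : NTTendsto (fun z => (f z - L) / (z - x)) x A) {z : ℂ} (hz : z ∈ UHP) :
    normSq (f z - L) * z.im ≤ normSq (z - x) * (A * (f z).im) := by
  have hvert : Tendsto (fun t : ℝ => (x : ℂ) + t * I) (𝓝[>] 0) (𝓝 (x : ℂ)) :=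
    (tendsto_vertical_ntRegion x).mono_right nhdsWithin_le_nhds
  have hlhs : Tendsto (fun t : ℝ => normSq (f (x + t * I) - f z) * z.im) (𝓝[>] 0)
      (𝓝 (normSq (L - f z) * z.im)) :=
    ((continuous_normSq.tendsto _).comp (hL.tendsto_vertical.sub_const _)).mul_const _
  have hrhs : Tendsto (fun t : ℝ => normSq (x + t * I - z) * ((f (x + t * I)).im / t * (f z).im))
      (𝓝[>] 0) (𝓝 (normSq (x - z) * (A * (f z).im))) :=
    ((continuous_normSq.tendsto _).comp (hvert.sub_const _)).mul
      ((tendsto_im_div_of_ntTendsto_slope hA).mul_const _)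
  have hle : ∀ᶠ t : ℝ in 𝓝[>] 0, normSq (f (x + t * I) - f z) * z.im ≤
      normSq (x + t * I - z) * ((f (x + t * I)).im / t * (f z).im) := by
    filter_upwards [self_mem_nhdsWithin] with t (ht : 0 < t)
    have hw : (x : ℂ) + t * I ∈ UHP := by simpa [UHP] using ht
    have hpick := normSq_sub_mul_im_le_of_mapsTo_UHP hd hmaps hz hw
    simp only [add_im, ofReal_im, mul_im, ofReal_re, I_re, I_im, mul_zero, mul_one, zero_add]
      at hpick
    rw [div_mul_eq_mul_div, mul_div_assoc', le_div_iff₀ ht]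
    linarith
  simpa only [normSq_sub_comm] using le_of_tendsto_of_tendsto hlhs hrhs hle

lemma im_neg_one_div (u : ℂ) : (-1 / u).im = u.im / normSq u := by
  rw [neg_div, one_div, neg_im, inv_im, neg_div, neg_neg]

lemma im_one_div_ofReal_mul (a : ℝ) (v : ℂ) : (1 / (a * v)).im = -(v.im / (a * normSq v)) := by
  rw [one_div, inv_im, im_ofReal_mul, normSq_mul, normSq_ofReal]
  rcases eq_or_ne a 0 with rfl | ha
  · simp
  · field_simp

theorem reduction_is_Pick (f : ℂ → ℂ) (x L A : ℝ)
    (hf : IsPick f)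
    (hnc : ∃ z ∈ UHP, ∃ w ∈ UHP, f z ≠ f w)
    (hL : NTTendsto f x (L : ℂ))
    (hApos : 0 < A)
    (hA : NTTendsto (fun z => (f z - (L : ℂ)) / (z - (x : ℂ))) x (A : ℂ)) :
    IsPick (fun z => -1 / (f z - (L : ℂ)) + 1 / ((A : ℂ) * (z - (x : ℂ)))) := by
  have hmaps := hf.mapsTo_UHP hnc
  have hfL : ∀ z ∈ UHP, f z - L ≠ 0 := fun z hz => sub_ofReal_ne_zero (hmaps hz) L
  have hzx : ∀ z ∈ UHP, z - x ≠ 0 := fun z hz => sub_ofReal_ne_zero hz x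
  refine ⟨?_, fun z hz => ?_⟩
  · exact ((differentiableOn_const _).div (hf.1.sub_const _) hfL).add
      ((differentiableOn_const _).div ((differentiableOn_id.sub_const _).const_mul _)
        fun z hz => mul_ne_zero (ofReal_ne_zero.2 hApos.ne') (hzx z hz))
  · have hjulia := julia_inequality hf.1 hmaps hL hA hz
    rw [add_im, im_neg_one_div, im_one_div_ofReal_mul, ← sub_eq_add_neg, sub_im, sub_im,
      ofReal_im, ofReal_im, sub_zero, sub_zero, sub_nonneg,
      div_le_div_iff₀ (mul_pos hApos (normSq_pos.2 (hzx z hz))) (normSq_pos.2 (hfL z hz))]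
    linarith
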